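/- arXiv:1201.6326 — 2 statements merged into one kernel-verified Lean document; each statement's English description precedes it below -/
import Mathlib

section
/- Let Ω₀, Θ₀ > 0 and C > 0, and let Ω : [0,T] → ℝ≥0 be a continuous function satisfying Ω(t) ≤ (Ω₀ + t·Θ₀·exp(C∫₀ᵗ Ω dτ))·(1 + C∫₀ᵗ Ω dτ) for all t ∈ [0,T]. If T·Θ₀·exp(C∫₀ᵀ Ω dτ) ≤ Ω₀, then Ω(t) ≤ 2Ω₀·e^{2CtΩ₀} for all t ∈ [0,T]. -/
open MeasureTheory intervalIntegral

/-!
Since `Ω ≥ 0`, `t ↦ ∫₀ᵗ Ω` is nondecreasing, so the smallness condition at `T` bounds the first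
factor of the hypothesis by `2Ω₀` at every `t`. Hence `Ω t ≤ 2Ω₀ + 2CΩ₀ ∫₀ᵗ Ω`, and the integral form
of Grönwall's inequality gives `Ω t ≤ 2Ω₀ e^{2CΩ₀t}`.
-/

theorem Continuous.le_mul_exp_of_le_add_integral {f : ℝ → ℝ} {a b c K : ℝ} (hf : Continuous f)
    (hK : 0 ≤ K) (h : ∀ t ∈ Set.Icc a b, f t ≤ c + K * ∫ τ in a..t, f τ) :
    ∀ t ∈ Set.Icc a b, f t ≤ c * Real.exp (K * (t - a)) := by
  rcases hK.eq_or_lt with rfl | hK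
  · simpa using h
  set F : ℝ → ℝ := fun t => ∫ τ in a..t, f τ
  have hF : ∀ t, HasDerivAt F (f t) t := fun t =>
    (hf.integral_hasStrictDerivAt a t).hasDerivAt
  have hFbound : ∀ t ∈ Set.Icc a b, F t ≤ gronwallBound 0 K c (t - a) :=
    le_gronwallBound_of_liminf_deriv_right_le
      (fun t _ => (hF t).continuousAt.continuousWithinAt)
      (fun t _ _ hr => (hF t).hasDerivWithinAt.liminf_right_slope_le hr)
      (by simp [F])
      (fun t ht => by linarith [h t (Set.Ico_subset_Icc_self ht)])
  intro t ht
  have hKF := mul_le_mul_of_nonneg_left (hFbound t ht) hK.le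
  rw [gronwallBound_of_K_ne_0 hK.ne'] at hKF
  field_simp at hKF
  linarith [h t ht]

theorem ContinuousOn.le_mul_exp_of_le_add_integral {f : ℝ → ℝ} {a b c K : ℝ}
    (hf : ContinuousOn f (Set.Icc a b)) (hK : 0 ≤ K)
    (h : ∀ t ∈ Set.Icc a b, f t ≤ c + K * ∫ τ in a..t, f τ) :
    ∀ t ∈ Set.Icc a b, f t ≤ c * Real.exp (K * (t - a)) := by
  intro t ht
  have hab : a ≤ b := ht.1.trans ht.2
  set g := Set.IccExtend hab ((Set.Icc a b).domRestrict f)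
  have hg : Set.EqOn g f (Set.Icc a b) := fun s hs => Set.IccExtend_of_mem hab _ hs
  have hg_int : ∀ s ∈ Set.Icc a b, ∫ τ in a..s, g τ = ∫ τ in a..s, f τ := fun s hs =>
    integral_congr (hg.mono (Set.uIcc_subset_Icc (Set.left_mem_Icc.2 hab) hs))
  have hg_cont : Continuous g := hf.domRestrict.Icc_extend'
  rw [← hg ht]
  refine hg_cont.le_mul_exp_of_le_add_integral hK (fun s hs => ?_) t ht
  rw [hg hs, hg_int s hs]
  exact h s hs

theorem stmt_2_general (T Ω₀ Θ₀ C : ℝ) (hΩ₀ : 0 < Ω₀) (hΘ₀ : 0 < Θ₀) (hC : 0 < C)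
    (Ω : ℝ → ℝ) (hΩcont : ContinuousOn Ω (Set.Icc 0 T))
    (hΩnn : ∀ t ∈ Set.Icc (0:ℝ) T, 0 ≤ Ω t)
    (hineq : ∀ t ∈ Set.Icc (0:ℝ) T,
      Ω t ≤ (Ω₀ + t * Θ₀ * Real.exp (C * ∫ τ in (0:ℝ)..t, Ω τ))
              * (1 + C * ∫ τ in (0:ℝ)..t, Ω τ))
    (hsmall : T * Θ₀ * Real.exp (C * ∫ τ in (0:ℝ)..T, Ω τ) ≤ Ω₀) :
    ∀ t ∈ Set.Icc (0:ℝ) T, Ω t ≤ 2 * Ω₀ * Real.exp (2 * C * t * Ω₀) := by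
  have hint_nonneg : ∀ t ∈ Set.Icc (0:ℝ) T, 0 ≤ ∫ τ in (0:ℝ)..t, Ω τ := fun t ht =>
    integral_nonneg ht.1 fun τ hτ => hΩnn τ ⟨hτ.1, hτ.2.trans ht.2⟩
  have hint_mono : ∀ t ∈ Set.Icc (0:ℝ) T, ∫ τ in (0:ℝ)..t, Ω τ ≤ ∫ τ in (0:ℝ)..T, Ω τ :=
    fun t ht => integral_mono_interval le_rfl ht.1 ht.2
      (ae_restrict_of_forall_mem measurableSet_Ioc fun τ hτ => hΩnn τ (Set.Ioc_subset_Icc_self hτ))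
      (hΩcont.intervalIntegrable_of_Icc (ht.1.trans ht.2))
  have hlinear : ∀ t ∈ Set.Icc (0:ℝ) T, Ω t ≤ 2 * Ω₀ + 2 * C * Ω₀ * ∫ τ in (0:ℝ)..t, Ω τ := by
    intro t ht
    have hsmall_t : t * Θ₀ * Real.exp (C * ∫ τ in (0:ℝ)..t, Ω τ) ≤ Ω₀ := by
      have hT : 0 ≤ T := ht.1.trans ht.2
      refine le_trans ?_ hsmall
      gcongr
      · exact ht.2
      · exact hint_mono t ht
    have hI_nonneg := hint_nonneg t ht
    calc Ω t ≤ (Ω₀ + t * Θ₀ * Real.exp (C * ∫ τ in (0:ℝ)..t, Ω τ))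
          * (1 + C * ∫ τ in (0:ℝ)..t, Ω τ) := hineq t ht
      _ ≤ (Ω₀ + Ω₀) * (1 + C * ∫ τ in (0:ℝ)..t, Ω τ) := by gcongr
      _ = 2 * Ω₀ + 2 * C * Ω₀ * ∫ τ in (0:ℝ)..t, Ω τ := by ring
  intro t ht
  calc Ω t ≤ 2 * Ω₀ * Real.exp (2 * C * Ω₀ * (t - 0)) :=
        hΩcont.le_mul_exp_of_le_add_integral (by positivity) hlinear t ht
    _ = 2 * Ω₀ * Real.exp (2 * C * t * Ω₀) := by ring_nf

theorem stmt_2 (T Ω₀ Θ₀ C : ℝ) (hT : 0 < T) (hΩ₀ : 0 < Ω₀) (hΘ₀ : 0 < Θ₀) (hC : 0 < C)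
    (Ω : ℝ → ℝ) (hΩcont : ContinuousOn Ω (Set.Icc 0 T))
    (hΩnn : ∀ t ∈ Set.Icc (0:ℝ) T, 0 ≤ Ω t)
    (hineq : ∀ t ∈ Set.Icc (0:ℝ) T,
      Ω t ≤ (Ω₀ + t * Θ₀ * Real.exp (C * ∫ τ in (0:ℝ)..t, Ω τ))
              * (1 + C * ∫ τ in (0:ℝ)..t, Ω τ))
    (hsmall : T * Θ₀ * Real.exp (C * ∫ τ in (0:ℝ)..T, Ω τ) ≤ Ω₀) :
    ∀ t ∈ Set.Icc (0:ℝ) T, Ω t ≤ 2 * Ω₀ * Real.exp (2 * C * t * Ω₀) :=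
  stmt_2_general T Ω₀ Θ₀ C hΩ₀ hΘ₀ hC Ω hΩcont hΩnn hineq hsmall
end

section
/- Let F : [0,T) → [1,∞) be continuous and satisfy F(t) ≤ F(0) + C∫₀ᵗ g(τ)·F(τ)·log(e + F(τ)) dτ, where g ≥ 0 is continuous with ∫₀ᵀ g dτ < ∞ and C > 0. Then F is bounded on [0,T); in fact log(e + F(t)) ≤ log(e + F(0))·exp(2C∫₀ᵗ g dτ) for all t ∈ [0,T). -/
/-! With `h(t) = F(0) + C ∫₀ᵗ g F log(e + F)` the right-hand side of the hypothesis, `F ≤ h`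
gives `(log (e + h))' = C g F log(e + F) / (e + h) ≤ C g log (e + h)`, since `F ≤ e + h`.
Grönwall's inequality for `u = log (e + h)` with the time-dependent rate `C g` (that is,
`u · exp (-C ∫₀ᵗ g)` is antitone) gives
`log (e + F) ≤ log (e + h) ≤ log (e + F(0)) · exp (C ∫₀ᵗ g)`. -/

open MeasureTheory intervalIntegral Set Real

theorem hasDerivAt_primitive_of_continuousOn {f : ℝ → ℝ} {a b x : ℝ}
    (hf : ContinuousOn f (Icc a b)) (hx : x ∈ Ioo a b) :
    HasDerivAt (fun t => ∫ τ in a..t, f τ) (f x) x := by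
  have hfo : ContinuousOn f (Ioo a b) := hf.mono Ioo_subset_Icc_self
  refine integral_hasDerivAt_right ?_ (hfo.stronglyMeasurableAtFilter isOpen_Ioo x hx)
    (hfo.continuousAt (isOpen_Ioo.mem_nhds hx))
  exact (hf.mono (uIcc_subset_Icc ⟨le_rfl, (hx.1.trans hx.2).le⟩ (Ioo_subset_Icc_self hx)))
    |>.intervalIntegrable

theorem continuousOn_primitive_of_continuousOn {f : ℝ → ℝ} {a b : ℝ} (hab : a ≤ b)
    (hf : ContinuousOn f (Icc a b)) :
    ContinuousOn (fun t => ∫ τ in a..t, f τ) (Icc a b) := by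
  have hint : IntegrableOn f (uIcc a b) volume := by
    rw [uIcc_of_le hab]; exact hf.integrableOn_Icc
  simpa only [uIcc_of_le hab] using continuousOn_primitive_interval hint

theorem le_mul_exp_sub_of_hasDerivAt_le_mul {u u' K k : ℝ → ℝ} {a b : ℝ} (hab : a ≤ b)
    (hu : ContinuousOn u (Icc a b)) (hK : ContinuousOn K (Icc a b))
    (hu' : ∀ x ∈ Ioo a b, HasDerivAt u (u' x) x) (hK' : ∀ x ∈ Ioo a b, HasDerivAt K (k x) x)
    (hle : ∀ x ∈ Ioo a b, u' x ≤ k x * u x) :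
    u b ≤ u a * exp (K b - K a) := by
  have hanti : AntitoneOn (fun t => u t * exp (-K t)) (Icc a b) := by
    refine antitoneOn_of_hasDerivWithinAt_nonpos (convex_Icc a b) (hu.mul hK.neg.rexp)
      (f' := fun x => (u' x - k x * u x) * exp (-K x)) (fun x hx => ?_) (fun x hx => ?_)
    · rw [interior_Icc] at hx ⊢
      have hd : HasDerivAt (fun t => u t * exp (-K t))
          (u' x * exp (-K x) + u x * (exp (-K x) * -k x)) x :=
        (hu' x hx).mul (hK' x hx).neg.exp
      exact hd.hasDerivWithinAt.congr_deriv (by ring)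
    · rw [interior_Icc] at hx
      exact mul_nonpos_of_nonpos_of_nonneg (sub_nonpos.2 (hle x hx)) (exp_pos _).le
  calc u b = u b * exp (-K b) * exp (K b) := by rw [mul_assoc, ← exp_add]; simp
    _ ≤ u a * exp (-K a) * exp (K b) :=
      mul_le_mul_of_nonneg_right (hanti (left_mem_Icc.2 hab) (right_mem_Icc.2 hab) hab)
        (exp_pos _).le
    _ = u a * exp (K b - K a) := by rw [mul_assoc, ← exp_add, neg_add_eq_sub]

theorem log_exp_one_add_nonneg {x : ℝ} (hx : 0 ≤ x) : 0 ≤ log (exp 1 + x) :=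
  log_nonneg (by linarith [add_one_le_exp 1])

theorem mul_log_exp_one_add_div_le {x y : ℝ} (hx : 0 ≤ x) (hxy : x ≤ y) :
    x * log (exp 1 + x) / (exp 1 + y) ≤ log (exp 1 + y) := by
  have hey : 0 < exp 1 + y := by linarith [exp_pos 1]
  rw [div_le_iff₀ hey]
  have hlog : log (exp 1 + x) ≤ log (exp 1 + y) :=
    log_le_log (by linarith [exp_pos 1]) (by linarith)
  nlinarith [log_exp_one_add_nonneg hx, exp_pos 1]

theorem log_exp_one_add_le_of_le_integral {F g : ℝ → ℝ} {C a b : ℝ} (hab : a ≤ b)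
    (hC : 0 ≤ C)
    (hF : ContinuousOn F (Icc a b)) (hF0 : ∀ s ∈ Icc a b, 0 ≤ F s)
    (hg : ContinuousOn g (Icc a b)) (hg0 : ∀ s ∈ Icc a b, 0 ≤ g s)
    (hineq : ∀ s ∈ Icc a b,
      F s ≤ F a + C * ∫ τ in a..s, g τ * F τ * log (exp 1 + F τ)) :
    log (exp 1 + F b) ≤ log (exp 1 + F a) * exp (C * ∫ τ in a..b, g τ) := by
  set f : ℝ → ℝ := fun τ => g τ * F τ * log (exp 1 + F τ)
  set h : ℝ → ℝ := fun s => F a + C * ∫ τ in a..s, f τ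
  have heF : ∀ s ∈ Icc a b, 0 < exp 1 + F s := fun s hs => by linarith [exp_pos 1, hF0 s hs]
  have heh : ∀ s ∈ Icc a b, 0 < exp 1 + h s := fun s hs => by linarith [heF s hs, hineq s hs]
  have hf : ContinuousOn f (Icc a b) :=
    (hg.mul hF).mul ((continuousOn_const.add hF).log fun s hs => (heF s hs).ne')
  have hh : ContinuousOn h (Icc a b) :=
    continuousOn_const.add (continuousOn_const.mul (continuousOn_primitive_of_continuousOn hab hf))
  have hderiv_le : ∀ x ∈ Ioo a b, C * f x / (exp 1 + h x) ≤ C * g x * log (exp 1 + h x) := by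
    intro x hx
    have hx' := Ioo_subset_Icc_self hx
    calc C * f x / (exp 1 + h x) = C * g x * (F x * log (exp 1 + F x) / (exp 1 + h x)) := by ring
      _ ≤ C * g x * log (exp 1 + h x) := by
        gcongr
        · exact mul_nonneg hC (hg0 x hx')
        · exact mul_log_exp_one_add_div_le (hF0 x hx') (hineq x hx')
  have hgronwall := le_mul_exp_sub_of_hasDerivAt_le_mul (u := fun s => log (exp 1 + h s))
    (K := fun s => C * ∫ τ in a..s, g τ) hab
    ((continuousOn_const.add hh).log fun s hs => (heh s hs).ne')
    (continuousOn_const.mul (continuousOn_primitive_of_continuousOn hab hg))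
    (fun x hx => ((((hasDerivAt_primitive_of_continuousOn hf hx).const_mul C).const_add
      (F a)).const_add (exp 1)).log (heh x (Ioo_subset_Icc_self hx)).ne')
    (fun x hx => (hasDerivAt_primitive_of_continuousOn hg hx).const_mul C) hderiv_le
  calc log (exp 1 + F b) ≤ log (exp 1 + h b) :=
        log_le_log (heF b (right_mem_Icc.2 hab)) (by linarith [hineq b (right_mem_Icc.2 hab)])
    _ ≤ log (exp 1 + F a) * exp (C * ∫ τ in a..b, g τ) := by
        simpa [h] using hgronwall

theorem stmt_13_general (T C : ℝ) (hC : 0 < C)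
    (F g : ℝ → ℝ)
    (hF : ContinuousOn F (Set.Ico 0 T)) (hF1 : ∀ t ∈ Set.Ico (0:ℝ) T, 1 ≤ F t)
    (hg : ContinuousOn g (Set.Ico 0 T)) (hgnn : ∀ t ∈ Set.Ico (0:ℝ) T, 0 ≤ g t)
    (hineq : ∀ t ∈ Set.Ico (0:ℝ) T,
      F t ≤ F 0 + C * ∫ τ in (0:ℝ)..t,
        g τ * F τ * Real.log (Real.exp 1 + F τ)) :
    ∀ t ∈ Set.Ico (0:ℝ) T,
      Real.log (Real.exp 1 + F t)
        ≤ Real.log (Real.exp 1 + F 0) * Real.exp (2 * C * ∫ τ in (0:ℝ)..t, g τ) := by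
  intro t ht
  have hsub : Icc 0 t ⊆ Ico 0 T := Icc_subset_Ico_right ht.2
  have hF0 : ∀ s ∈ Icc 0 t, 0 ≤ F s := fun s hs => zero_le_one.trans (hF1 s (hsub hs))
  have hG : 0 ≤ ∫ τ in (0:ℝ)..t, g τ := integral_nonneg ht.1 fun s hs => hgnn s (hsub hs)
  calc log (exp 1 + F t) ≤ log (exp 1 + F 0) * exp (C * ∫ τ in (0:ℝ)..t, g τ) :=
        log_exp_one_add_le_of_le_integral ht.1 hC.le (hF.mono hsub) hF0 (hg.mono hsub)
          (fun s hs => hgnn s (hsub hs)) (fun s hs => hineq s (hsub hs))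
    _ ≤ log (exp 1 + F 0) * exp (2 * C * ∫ τ in (0:ℝ)..t, g τ) := by
        gcongr
        · exact log_exp_one_add_nonneg (hF0 0 (left_mem_Icc.2 ht.1))
        · nlinarith

theorem stmt_13 (T C : ℝ) (hT : 0 < T) (hC : 0 < C)
    (F g : ℝ → ℝ)
    (hF : ContinuousOn F (Set.Ico 0 T)) (hF1 : ∀ t ∈ Set.Ico (0:ℝ) T, 1 ≤ F t)
    (hg : ContinuousOn g (Set.Ico 0 T)) (hgnn : ∀ t ∈ Set.Ico (0:ℝ) T, 0 ≤ g t)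
    (hgint : IntegrableOn g (Set.Ico 0 T))
    (hineq : ∀ t ∈ Set.Ico (0:ℝ) T,
      F t ≤ F 0 + C * ∫ τ in (0:ℝ)..t,
        g τ * F τ * Real.log (Real.exp 1 + F τ)) :
    ∀ t ∈ Set.Ico (0:ℝ) T,
      Real.log (Real.exp 1 + F t)
        ≤ Real.log (Real.exp 1 + F 0) * Real.exp (2 * C * ∫ τ in (0:ℝ)..t, g τ) :=
  stmt_13_general T C hC F g hF hF1 hg hgnn hineq
end
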